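/- arXiv:1012.0550 — 4 statements merged into one kernel-verified Lean document; each statement's English description precedes it below -/
import Mathlib

section
/- Let 1 ≤ n ≤ k be integers. A polynomial P on ℝ^n is invariant under the hyperoctahedral group H_n if and only if there exists a polynomial Q on ℝ^k invariant under the hyperoctahedral group H_k such that Q(0_{k−n}, x) = P(x) for all x ∈ ℝ^n. In particular, the restriction map Q ↦ Q(0_{k−n}, ·) carries the algebra of H_k-invariant polynomials on ℝ^k onto the algebra of H_n-invariant polynomials on ℝ^n. -/
/-!
Invariance under the sign change of a single coordinate forces every exponent of `P` to be even,
so `P(x) = R(x₁², …, xₙ²)`; invariance under permutations makes `R` symmetric, hence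
`R = Φ(e₁, …, eₙ)` by the fundamental theorem on symmetric polynomials. Then
`Q(y) = Φ(e₁(y²), …, eₙ(y²))` is `H_k`-invariant, and it restricts to `P` because padding by zeros
does not change the elementary symmetric polynomials. Conversely, a signed permutation of the
last `n` coordinates that fixes the first `k - n` lies in `H_k` and commutes with padding.
-/

/-- The padding map `ℝ^n → ℝ^k`, `x ↦ (0_{k-n}, x)`. -/
def padk (k n : ℕ) (x : Fin n → ℝ) : Fin k → ℝ :=
  fun j => if h : (j : ℕ) < k - n then 0
    else x ⟨(j : ℕ) - (k - n), by have := j.isLt; omega⟩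

/-- `P` is invariant under the hyperoctahedral group `H_m` of signed
permutations `x ↦ (ε_j x_{σ(j)})_j`. -/
def HInv (m : ℕ) (P : MvPolynomial (Fin m) ℝ) : Prop :=
  ∀ (σ : Equiv.Perm (Fin m)) (ε : Fin m → ℝ), (∀ j, ε j = 1 ∨ ε j = -1) →
    ∀ x : Fin m → ℝ,
      MvPolynomial.eval (fun j => ε j * x (σ j)) P = MvPolynomial.eval x P

open MvPolynomial

namespace Multiset

variable {R : Type*} [CommSemiring R]

lemma esymm_zero_cons (s : Multiset R) (i : ℕ) : (0 ::ₘ s).esymm i = s.esymm i := by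
  cases i with
  | zero => simp [esymm]
  | succ i => simp [esymm, powersetCard_cons]

lemma esymm_replicate_zero_add (m : ℕ) (s : Multiset R) (i : ℕ) :
    (replicate m 0 + s).esymm i = s.esymm i := by
  induction m with
  | zero => rw [replicate_zero, zero_add]
  | succ m ih => rw [replicate_succ, cons_add, esymm_zero_cons, ih]

end Multiset

namespace MvPolynomial

variable {σ τ R : Type*}

lemma eval_aeval [CommSemiring R] (x : τ → R) (g : σ → MvPolynomial τ R)
    (φ : MvPolynomial σ R) : eval x (aeval g φ) = eval (fun i => eval x (g i)) φ :=
  comp_aeval_apply g (aeval x) φ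

lemma mem_range_expand_of_forall_dvd [CommSemiring R] {p : ℕ} {φ : MvPolynomial σ R}
    (h : ∀ d ∈ φ.support, ∀ i, p ∣ d i) : φ ∈ (expand p).range := by
  rw [φ.as_sum]
  refine Subalgebra.sum_mem _ fun d hd => ?_
  obtain ⟨e, rfl⟩ : ∃ e, d = p • e :=
    ⟨d.mapRange (· / p) (Nat.zero_div p), by ext i; simp [Nat.mul_div_cancel' (h d hd i)]⟩
  exact ⟨monomial e _, expand_monomial ..⟩

lemma aeval_C_mul_X_monomial [CommSemiring R] (s : σ → R) (d : σ →₀ ℕ) (c : R) :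
    aeval (fun i => C (s i) * X i) (monomial d c) =
      monomial d ((d.prod fun i k => s i ^ k) * c) := by
  rw [aeval_monomial, algebraMap_eq, monomial_eq, C_mul]
  simp only [mul_pow, Finsupp.prod_mul, ← map_pow, ← map_finsuppProd]
  ring

lemma coeff_aeval_C_mul_X [CommSemiring R] (s : σ → R) (φ : MvPolynomial σ R) (d : σ →₀ ℕ) :
    coeff d (aeval (fun i => C (s i) * X i) φ) = (d.prod fun i k => s i ^ k) * coeff d φ := by
  classical
  induction φ using induction_on' with
  | monomial e c =>
    rw [aeval_C_mul_X_monomial, coeff_monomial, coeff_monomial]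
    split_ifs with h
    · rw [h]
    · rw [mul_zero]
  | add φ ψ hφ hψ => rw [map_add, coeff_add, coeff_add, hφ, hψ, mul_add]

lemma even_of_aeval_update_neg_one_eq_self [CommRing R] [NoZeroDivisors R] [CharZero R]
    [DecidableEq σ] [Fintype σ] {φ : MvPolynomial σ R} {j : σ}
    (h : aeval (fun i => C (Function.update (1 : σ → R) j (-1) i) * X i) φ = φ)
    {d : σ →₀ ℕ} (hd : d ∈ φ.support) : Even (d j) := by
  have hc := congrArg (coeff d) h
  rw [coeff_aeval_C_mul_X, Finsupp.prod_fintype _ _ (fun _ => pow_zero _),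
    Fintype.prod_eq_single j (fun i hi => by simp [hi]), Function.update_self] at hc
  by_contra hodd
  rw [(Nat.not_even_iff_odd.mp hodd).neg_one_pow, neg_one_mul, CharZero.neg_eq_self_iff] at hc
  exact mem_support_iff.mp hd hc

variable [CommSemiring R] {m n : ℕ}

lemma eval_append_zero_expand {p : ℕ} (hp : p ≠ 0) (φ : MvPolynomial (Fin (m + n)) R)
    (x : Fin n → R) : eval (Fin.append 0 x) (expand p φ) = eval (Fin.append 0 (x ^ p)) φ := by
  rw [eval_expand]
  congr 2
  funext j
  refine Fin.addCases (fun a => ?_) (fun b => ?_) j <;>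
    simp [Fin.append_left, Fin.append_right, zero_pow hp]

lemma eval_append_zero_esymm (x : Fin n → R) (i : ℕ) :
    eval (Fin.append (0 : Fin m → R) x) (esymm (Fin (m + n)) R i) =
      eval x (esymm (Fin n) R i) := by
  simp only [← aeval_eq_eval, aeval_esymm_eq_multiset_esymm, Fin.univ_val_map,
    List.ofFn_fin_append, ← Multiset.coe_add, Pi.zero_def, List.ofFn_const,
    Multiset.coe_replicate, Multiset.esymm_replicate_zero_add]

lemma eval_append_zero_esymmAlgHom (k : ℕ) (Φ : MvPolynomial (Fin k) R) (x : Fin n → R) :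
    eval (Fin.append (0 : Fin m → R) x) (esymmAlgHom (Fin (m + n)) R k Φ : MvPolynomial _ R) =
      eval x (esymmAlgHom (Fin n) R k Φ : MvPolynomial _ R) := by
  simp only [esymmAlgHom_apply, eval_aeval, eval_append_zero_esymm]

end MvPolynomial

lemma padk_add_eq_append (m n : ℕ) (x : Fin n → ℝ) : padk (m + n) n x = Fin.append 0 x := by
  funext j
  refine Fin.addCases (fun a => ?_) (fun b => ?_) j <;>
    simp [padk, Fin.append_left, Fin.append_right]

lemma append_one_mul_append_zero_sumCongr {M : Type*} [MulZeroOneClass M] {m n : ℕ}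
    (σ : Equiv.Perm (Fin n)) (ε x : Fin n → M) :
    (fun j => Fin.append 1 ε j *
        Fin.append (0 : Fin m → M) x (finSumFinEquiv.permCongr (Equiv.Perm.sumCongr 1 σ) j)) =
      Fin.append 0 (fun i => ε i * x (σ i)) := by
  funext j
  refine Fin.addCases (fun a => ?_) (fun b => ?_) j <;> simp [Fin.append_left, Fin.append_right]

section HInv

variable {m : ℕ} {P : MvPolynomial (Fin m) ℝ}

lemma HInv.aeval_update_neg_one_eq_self (hP : HInv m P) (j : Fin m) :
    aeval (fun i => C (Function.update (1 : Fin m → ℝ) j (-1) i) * X i) P = P := by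
  refine MvPolynomial.funext fun x => ?_
  have hsign : ∀ i, Function.update (1 : Fin m → ℝ) j (-1) i = 1 ∨
      Function.update (1 : Fin m → ℝ) j (-1) i = -1 := by
    intro i
    rcases eq_or_ne i j with rfl | h <;> simp [*]
  rw [eval_aeval]
  simpa using hP 1 _ hsign x

lemma HInv.isSymmetric (hP : HInv m P) : P.IsSymmetric := fun e =>
  MvPolynomial.funext fun x => by
    simpa [eval_rename, Function.comp_def] using hP e 1 (fun _ => Or.inl rfl) x

lemma HInv.exists_expand_esymmAlgHom (hP : HInv m P) :
    ∃ Φ : MvPolynomial (Fin m) ℝ, expand 2 (esymmAlgHom (Fin m) ℝ m Φ : MvPolynomial _ ℝ) = P := by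
  obtain ⟨R, rfl⟩ := (AlgHom.mem_range _).mp <| mem_range_expand_of_forall_dvd fun d hd j =>
    (even_of_aeval_update_neg_one_eq_self (hP.aeval_update_neg_one_eq_self j) hd).two_dvd
  have hR : R.IsSymmetric := fun e =>
    expand_injective two_pos (by rw [← rename_expand, hP.isSymmetric e])
  obtain ⟨Φ, hΦ⟩ := esymmAlgHom_surjective ℝ (Fintype.card_fin m).le ⟨R, hR⟩
  exact ⟨Φ, by rw [hΦ]⟩

lemma hInv_expand_two_of_isSymmetric {φ : MvPolynomial (Fin m) ℝ} (hφ : φ.IsSymmetric) :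
    HInv m (expand 2 φ) := by
  intro σ ε hε x
  have hsq : (fun j => ε j * x (σ j)) ^ 2 = (x ^ 2) ∘ σ := by
    funext j
    rcases hε j with h | h <;> simp [h]
  rw [eval_expand, eval_expand, hsq, ← eval_rename, hφ σ]

end HInv

lemma HInv.of_eval_append_zero {m n : ℕ} {Q : MvPolynomial (Fin (m + n)) ℝ}
    {P : MvPolynomial (Fin n) ℝ} (hQ : HInv (m + n) Q)
    (hQP : ∀ x, eval (Fin.append 0 x) Q = eval x P) : HInv n P := by
  intro σ ε hε x
  have hε' : ∀ j, Fin.append (1 : Fin m → ℝ) ε j = 1 ∨ Fin.append (1 : Fin m → ℝ) ε j = -1 := by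
    intro j
    refine Fin.addCases (fun a => ?_) (fun b => ?_) j
    · simp [Fin.append_left]
    · simpa [Fin.append_right] using hε b
  rw [← hQP, ← hQP, ← append_one_mul_append_zero_sumCongr]
  exact hQ _ _ hε' _

theorem stmt_3_general (n k : ℕ) (hnk : n ≤ k) (P : MvPolynomial (Fin n) ℝ) :
    HInv n P ↔
      ∃ Q : MvPolynomial (Fin k) ℝ, HInv k Q ∧
        ∀ x : Fin n → ℝ,
          MvPolynomial.eval (padk k n x) Q = MvPolynomial.eval x P := by
  obtain ⟨m, rfl⟩ := Nat.exists_eq_add_of_le' hnk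
  simp only [padk_add_eq_append]
  constructor
  · intro hP
    obtain ⟨Φ, rfl⟩ := hP.exists_expand_esymmAlgHom
    refine ⟨expand 2 (esymmAlgHom (Fin (m + n)) ℝ n Φ),
      hInv_expand_two_of_isSymmetric (Subtype.prop _), fun x => ?_⟩
    rw [eval_append_zero_expand two_ne_zero, eval_append_zero_esymmAlgHom, eval_expand]
  · rintro ⟨Q, hQ, hQP⟩
    exact hQ.of_eval_append_zero hQP

/-- a polynomial `P` on `ℝ^n` is `H_n`-invariant iff there is an
`H_k`-invariant polynomial `Q` on `ℝ^k` with `Q(0_{k-n}, x) = P(x)` for all `x`;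
i.e. restriction maps the `H_k`-invariant polynomials onto the `H_n`-invariant
polynomials. -/
theorem stmt_3 (n k : ℕ) (hn : 1 ≤ n) (hnk : n ≤ k) (P : MvPolynomial (Fin n) ℝ) :
    HInv n P ↔
      ∃ Q : MvPolynomial (Fin k) ℝ, HInv k Q ∧
        ∀ x : Fin n → ℝ,
          MvPolynomial.eval (padk k n x) Q = MvPolynomial.eval x P :=
  stmt_3_general n k hnk P
end

section
/- Let 1 ≤ n < k be integers. For every polynomial Q on ℝ^k invariant under W(D_k), the restricted polynomial x ↦ Q(0_{k−n}, x) on ℝ^n is invariant under the full hyperoctahedral group H_n. Consequently, there is no W(D_k)-invariant polynomial Q on ℝ^k with Q(0_{k−n}, x) = x_1 x_2 ⋯ x_n for all x ∈ ℝ^n; since the product x_1⋯x_n is W(D_n)-invariant, the restriction map from W(D_k)-invariant polynomials on ℝ^k to W(D_n)-invariant polynomials on ℝ^n is not surjective. -/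
/-- `P` is invariant under `W(D_m)`, the group of signed permutations
`x ↦ (ε_j x_{σ(j)})_j` with an even number of sign changes (`∏ ε_j = 1`). -/
def DInv (m : ℕ) (P : MvPolynomial (Fin m) ℝ) : Prop :=
  ∀ (σ : Equiv.Perm (Fin m)) (ε : Fin m → ℝ), (∀ j, ε j = 1 ∨ ε j = -1) →
    (∏ j, ε j) = 1 →
    ∀ x : Fin m → ℝ,
      MvPolynomial.eval (fun j => ε j * x (σ j)) P = MvPolynomial.eval x P


def extPerm (k n : ℕ) (h : n ≤ k) (τ : Equiv.Perm (Fin n)) : Equiv.Perm (Fin k) where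
  toFun j := if hj : (j : ℕ) < k - n then j
    else ⟨(τ ⟨(j : ℕ) - (k - n), by have := j.isLt; omega⟩ : ℕ) + (k - n),
      by have := (τ ⟨(j : ℕ) - (k - n), by have := j.isLt; omega⟩).isLt; omega⟩
  invFun j := if hj : (j : ℕ) < k - n then j
    else ⟨(τ.symm ⟨(j : ℕ) - (k - n), by have := j.isLt; omega⟩ : ℕ) + (k - n),
      by have := (τ.symm ⟨(j : ℕ) - (k - n), by have := j.isLt; omega⟩).isLt; omega⟩
  left_inv j := by
    by_cases hj : (j : ℕ) < k - n
    · simp [hj]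
    · dsimp only
      rw [dif_neg hj, dif_neg (by simp)]
      apply Fin.ext
      simp only
      have h1 : (⟨(τ ⟨(j : ℕ) - (k - n), by have := j.isLt; omega⟩ : ℕ) + (k - n) - (k - n),
          by have := (τ ⟨(j : ℕ) - (k - n), by have := j.isLt; omega⟩).isLt; omega⟩ : Fin n)
          = τ ⟨(j : ℕ) - (k - n), by have := j.isLt; omega⟩ := Fin.ext (by simp)
      rw [h1, Equiv.symm_apply_apply]
      have := j.isLt; simp; omega
  right_inv j := by
    by_cases hj : (j : ℕ) < k - n
    · simp [hj]
    · dsimp only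
      rw [dif_neg hj, dif_neg (by simp)]
      apply Fin.ext
      simp only
      have h1 : (⟨(τ.symm ⟨(j : ℕ) - (k - n), by have := j.isLt; omega⟩ : ℕ) + (k - n) - (k - n),
          by have := (τ.symm ⟨(j : ℕ) - (k - n), by have := j.isLt; omega⟩).isLt; omega⟩ : Fin n)
          = τ.symm ⟨(j : ℕ) - (k - n), by have := j.isLt; omega⟩ := Fin.ext (by simp)
      rw [h1, Equiv.apply_symm_apply]
      have := j.isLt; simp; omega

/-- the lowering map Fin k → Fin n (junk on the first k-n indices) -/
def lowIdx (k n : ℕ) (hn : 1 ≤ n) (hnk : n < k) (j : Fin k) : Fin n :=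
  ⟨(j : ℕ) - (k - n), by have := j.isLt; omega⟩

/-- extended sign vector -/
def extSign (k n : ℕ) (hn : 1 ≤ n) (hnk : n < k) (δ : Fin n → ℝ) (j : Fin k) : ℝ :=
  if (j : ℕ) < k - n then (if (j : ℕ) = 0 then ∏ i, δ i else 1)
  else δ (lowIdx k n hn hnk j)

lemma extSign_pm (k n : ℕ) (hn : 1 ≤ n) (hnk : n < k) (δ : Fin n → ℝ)
    (hδ : ∀ j, δ j = 1 ∨ δ j = -1) (j : Fin k) :
    extSign k n hn hnk δ j = 1 ∨ extSign k n hn hnk δ j = -1 := by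
  have hp : (∏ i, δ i) = 1 ∨ (∏ i, δ i) = -1 :=
    Finset.prod_induction δ (fun r => r = 1 ∨ r = -1)
      (by rintro a b (ha | ha) (hb | hb) <;> simp [ha, hb]) (Or.inl rfl)
      (fun i _ => hδ i)
  unfold extSign
  split_ifs
  · exact hp
  · left; rfl
  · exact hδ _

lemma prod_extSign (k n : ℕ) (hn : 1 ≤ n) (hnk : n < k) (δ : Fin n → ℝ)
    (hδ : ∀ j, δ j = 1 ∨ δ j = -1) :
    ∏ j, extSign k n hn hnk δ j = 1 := by
  have hk : k - n + n = k := by omega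
  have h1 : ∏ j, extSign k n hn hnk δ j
      = ∏ i : Fin (k - n + n), extSign k n hn hnk δ (finCongr hk i) :=
    (Fintype.prod_equiv (finCongr hk) _ _ (fun i => rfl)).symm
  rw [h1, Fin.prod_univ_add]
  have h2 : ∀ i : Fin (k - n),
      extSign k n hn hnk δ (finCongr hk (Fin.castAdd n i))
        = (if (i : ℕ) = 0 then ∏ i, δ i else 1) := by
    intro i
    have : ((finCongr hk (Fin.castAdd n i) : Fin k) : ℕ) = (i : ℕ) := rfl
    unfold extSign
    rw [this, if_pos i.isLt]
  have h3 : ∀ i : Fin n,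
      extSign k n hn hnk δ (finCongr hk (Fin.natAdd (k - n) i)) = δ i := by
    intro i
    have hv : ((finCongr hk (Fin.natAdd (k - n) i) : Fin k) : ℕ) = k - n + (i : ℕ) := rfl
    unfold extSign lowIdx
    rw [if_neg (by omega)]
    congr 1
    apply Fin.ext
    simp [hv]
  rw [Finset.prod_congr rfl (fun i _ => h2 i), Finset.prod_congr rfl (fun i _ => h3 i)]
  have h4 : ∏ i : Fin (k - n), (if (i : ℕ) = 0 then ∏ i, δ i else 1) = ∏ i, δ i := by
    rw [Finset.prod_eq_single (⟨0, by omega⟩ : Fin (k - n))]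
    · simp
    · intro b _ hb
      rw [if_neg (by simpa [Fin.ext_iff] using hb)]
    · simp
  rw [h4, ← Finset.prod_mul_distrib]
  apply Finset.prod_eq_one
  intro i _
  rcases hδ i with h | h <;> simp [h]

lemma pad_eq (k n : ℕ) (hn : 1 ≤ n) (hnk : n < k) (τ : Equiv.Perm (Fin n))
    (δ : Fin n → ℝ) (x : Fin n → ℝ) :
    padk k n (fun j => δ j * x (τ j))
      = fun j => extSign k n hn hnk δ j * padk k n x (extPerm k n (le_of_lt hnk) τ j) := by
  funext j
  unfold padk extSign extPerm lowIdx
  by_cases hj : (j : ℕ) < k - n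
  · simp only [dif_pos hj, if_pos hj, Equiv.coe_fn_mk, mul_zero]
  · simp only [dif_neg hj, if_neg hj, Equiv.coe_fn_mk]
    congr 1
    split
    · next hlt => exact absurd hlt (by simp)
    · apply congrArg
      apply Fin.ext
      simp

/-- for `1 ≤ n < k`: (a) the restriction `x ↦ Q(0_{k-n}, x)` of any
`W(D_k)`-invariant polynomial `Q` is invariant under the full hyperoctahedral
group `H_n`; (b) consequently no `W(D_k)`-invariant `Q` restricts to
`x_1 ⋯ x_n`; (c) since `x_1 ⋯ x_n` is `W(D_n)`-invariant, the restriction map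
from `W(D_k)`-invariants to `W(D_n)`-invariants is not surjective. -/
theorem stmt_5 (n k : ℕ) (hn : 1 ≤ n) (hnk : n < k) :
    -- (a)
    (∀ Q : MvPolynomial (Fin k) ℝ, DInv k Q →
      ∀ (τ : Equiv.Perm (Fin n)) (δ : Fin n → ℝ), (∀ j, δ j = 1 ∨ δ j = -1) →
        ∀ x : Fin n → ℝ,
          MvPolynomial.eval (padk k n (fun j => δ j * x (τ j))) Q =
            MvPolynomial.eval (padk k n x) Q) ∧
    -- (b)
    (¬ ∃ Q : MvPolynomial (Fin k) ℝ, DInv k Q ∧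
        ∀ x : Fin n → ℝ, MvPolynomial.eval (padk k n x) Q = ∏ j, x j) ∧
    -- the product x₁⋯xₙ is W(Dₙ)-invariant …
    DInv n (∏ j, MvPolynomial.X j) ∧
    -- (c) … so the restriction map is not surjective onto the W(Dₙ)-invariants:
    ¬ (∀ P : MvPolynomial (Fin n) ℝ, DInv n P →
        ∃ Q : MvPolynomial (Fin k) ℝ, DInv k Q ∧
          ∀ x : Fin n → ℝ,
            MvPolynomial.eval (padk k n x) Q = MvPolynomial.eval x P) := by
  
  have parta : ∀ Q : MvPolynomial (Fin k) ℝ, DInv k Q →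
      ∀ (τ : Equiv.Perm (Fin n)) (δ : Fin n → ℝ), (∀ j, δ j = 1 ∨ δ j = -1) →
        ∀ x : Fin n → ℝ,
          MvPolynomial.eval (padk k n (fun j => δ j * x (τ j))) Q =
            MvPolynomial.eval (padk k n x) Q := by
    intro Q hQ τ δ hδ x
    rw [pad_eq k n hn hnk τ δ x]
    exact hQ (extPerm k n hnk.le τ) (extSign k n hn hnk δ)
      (extSign_pm k n hn hnk δ hδ) (prod_extSign k n hn hnk δ hδ) (padk k n x)
  have partb : ¬ ∃ Q : MvPolynomial (Fin k) ℝ, DInv k Q ∧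
      ∀ x : Fin n → ℝ, MvPolynomial.eval (padk k n x) Q = ∏ j, x j := by
    rintro ⟨Q, hQ, hres⟩
    set δ : Fin n → ℝ := fun j => if (j : ℕ) = 0 then -1 else 1 with hδdef
    have hδ : ∀ j, δ j = 1 ∨ δ j = -1 := by
      intro j; simp only [hδdef]; split_ifs <;> simp
    have hkey := parta Q hQ (Equiv.refl _) δ hδ (fun _ => 1)
    rw [hres, hres] at hkey
    have hprod : ∏ j : Fin n, δ j = -1 := by
      rw [Finset.prod_eq_single (⟨0, by omega⟩ : Fin n)]
      · simp [hδdef]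
      · intro b _ hb
        simp only [hδdef]
        rw [if_neg (by simpa [Fin.ext_iff] using hb)]
      · simp
    simp only [mul_one, Finset.prod_const_one, Equiv.refl_apply] at hkey
    rw [hprod] at hkey
    linarith
  have partp : DInv n (∏ j, MvPolynomial.X j) := by
    intro σ ε hε hprodε x
    simp only [map_prod, MvPolynomial.eval_X]
    rw [Finset.prod_mul_distrib, hprodε, one_mul, Equiv.prod_comp σ x]
  refine ⟨parta, partb, partp, ?_⟩
  intro hsurj
  obtain ⟨Q, hQ, hres⟩ := hsurj (∏ j, MvPolynomial.X j) partp
  exact partb ⟨Q, hQ, fun x => by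
    rw [hres x]; simp [map_prod, MvPolynomial.eval_X]⟩
end

section
/- Let k ≥ 3 and let 3 ≤ m ≤ k. Let V = {x ∈ ℝ^k : x_{m+1} = ⋯ = x_k = 0 and x_1 + ⋯ + x_m = 0}. Then −id_V is the restriction to V of an element of H_k stabilizing V; consequently, for every H_k-invariant polynomial Q on ℝ^k, the restriction Q|_V satisfies Q|_V(−x) = Q|_V(x) for all x ∈ V. In particular, the function p(x) = x_1³ + ⋯ + x_m³ on V, which is invariant under the permutations of the first m coordinates and not identically zero on V, is NOT the restriction to V of any H_k-invariant polynomial on ℝ^k; hence the restriction of H_k-invariant polynomials to V does not map onto the permutation-invariant polynomial functions on V. -/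
/-- `k ≥ 3`, `3 ≤ m ≤ k`, and
`V = {x ∈ ℝ^k | x_{m+1} = ⋯ = x_k = 0, x_1 + ⋯ + x_m = 0}`.
(a) `-id_V` is the restriction to `V` of an element of `H_k` stabilizing `V`;
(b) hence the restriction to `V` of any `H_k`-invariant polynomial `Q` is even;
(c) `p(x) = x_1³ + ⋯ + x_m³` is not identically zero on `V` and is not the
restriction to `V` of any `H_k`-invariant polynomial;
(d) since `p` is invariant under the permutations of the first `m` coordinates,
restriction of `H_k`-invariant polynomials to `V` does not map onto the
permutation-invariant polynomial functions on `V`. -/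
theorem stmt_8 (k m : ℕ) (hk : 3 ≤ k) (hm : 3 ≤ m) (hmk : m ≤ k)
    (V : Set (Fin k → ℝ))
    (hV : V = {x | (∀ j : Fin k, m ≤ (j : ℕ) → x j = 0) ∧
        ∑ j ∈ Finset.univ.filter (fun j : Fin k => (j : ℕ) < m), x j = 0}) :
    -- (a)
    (∃ (σ : Equiv.Perm (Fin k)) (ε : Fin k → ℝ), (∀ j, ε j = 1 ∨ ε j = -1) ∧
      (fun x : Fin k → ℝ => fun j => ε j * x (σ j)) '' V = V ∧
      ∀ x ∈ V, (fun j => ε j * x (σ j)) = -x) ∧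
    -- (b)
    (∀ Q : MvPolynomial (Fin k) ℝ, HInv k Q → ∀ x ∈ V,
      MvPolynomial.eval (-x) Q = MvPolynomial.eval x Q) ∧
    -- (c)
    ((∃ x ∈ V, ∑ j ∈ Finset.univ.filter (fun j : Fin k => (j : ℕ) < m),
        (x j) ^ 3 ≠ 0) ∧
     ¬ ∃ Q : MvPolynomial (Fin k) ℝ, HInv k Q ∧
        ∀ x ∈ V, MvPolynomial.eval x Q =
          ∑ j ∈ Finset.univ.filter (fun j : Fin k => (j : ℕ) < m), (x j) ^ 3) ∧
    -- (d)
    ¬ (∀ P : MvPolynomial (Fin k) ℝ,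
        (∀ σ : Equiv.Perm (Fin k), (∀ j : Fin k, m ≤ (j : ℕ) → σ j = j) →
          ∀ x ∈ V, MvPolynomial.eval (fun i => x (σ i)) P = MvPolynomial.eval x P) →
        ∃ Q : MvPolynomial (Fin k) ℝ, HInv k Q ∧
          ∀ x ∈ V, MvPolynomial.eval x Q = MvPolynomial.eval x P) := by
  classical
  set F := Finset.univ.filter (fun j : Fin k => (j : ℕ) < m) with hF
  have hVmem : ∀ x : Fin k → ℝ, x ∈ V ↔
      ((∀ j : Fin k, m ≤ (j : ℕ) → x j = 0) ∧ ∑ j ∈ F, x j = 0) := by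
    intro x; rw [hV]; simp [hF]
  have hneg : ∀ x ∈ V, -x ∈ V := by
    intro x hx
    rw [hVmem] at hx ⊢
    refine ⟨fun j hj => by simp [hx.1 j hj], ?_⟩
    simp only [Pi.neg_apply, Finset.sum_neg_distrib, hx.2, neg_zero]
  -- (b)
  have hb : ∀ Q : MvPolynomial (Fin k) ℝ, HInv k Q → ∀ x ∈ V,
      MvPolynomial.eval (-x) Q = MvPolynomial.eval x Q := by
    intro Q hQ x _
    have := hQ 1 (fun _ => -1) (fun _ => Or.inr rfl) x
    have he : (fun j => (-1 : ℝ) * x ((1 : Equiv.Perm (Fin k)) j)) = -x := by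
      funext j; simp
    rwa [he] at this
  -- witness for (c), part 1
  have h0k : (0 : ℕ) < k := by omega
  have h1k : (1 : ℕ) < k := by omega
  have h2k : (2 : ℕ) < k := by omega
  set i0 : Fin k := ⟨0, h0k⟩ with hi0
  set i1 : Fin k := ⟨1, h1k⟩ with hi1
  set i2 : Fin k := ⟨2, h2k⟩ with hi2
  have h01 : i0 ≠ i1 := by simp [hi0, hi1, Fin.ext_iff]
  have h02 : i0 ≠ i2 := by simp [hi0, hi2, Fin.ext_iff]
  have h12 : i1 ≠ i2 := by simp [hi1, hi2, Fin.ext_iff]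
  set w : Fin k → ℝ :=
    fun j => if j = i0 then 2 else if j = i1 then -1 else if j = i2 then -1 else 0 with hw
  have hwz : ∀ j : Fin k, ¬ ((j : ℕ) < m) → w j = 0 := by
    intro j hj
    have hj0 : j ≠ i0 := by rintro rfl; simp [hi0] at hj; omega
    have hj1 : j ≠ i1 := by rintro rfl; simp [hi1] at hj; omega
    have hj2 : j ≠ i2 := by rintro rfl; simp [hi2] at hj; omega
    simp [hw, hj0, hj1, hj2]
  set s : Finset (Fin k) := {i0, i1, i2} with hs
  have hsub : s ⊆ F := by
    intro j hj
    simp only [hs, Finset.mem_insert, Finset.mem_singleton] at hj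
    rcases hj with rfl | rfl | rfl <;>
      simp [hF, Finset.mem_filter, hi0, hi1, hi2] <;> omega
  have hsumgen : ∀ f : ℝ → ℝ, f 0 = 0 →
      ∑ j ∈ F, f (w j) = f 2 + f (-1) + f (-1) := by
    intro f hf0
    have h1 : ∑ j ∈ F, f (w j) = ∑ j ∈ s, f (w j) := by
      refine (Finset.sum_subset hsub ?_).symm
      intro j _ hjs
      simp only [hs, Finset.mem_insert, Finset.mem_singleton, not_or] at hjs
      simp [hw, hjs.1, hjs.2.1, hjs.2.2, hf0]
    rw [h1, hs]
    rw [Finset.sum_insert (by simp [h01, h02]),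
      Finset.sum_insert (by simp [h12]), Finset.sum_singleton]
    have e0 : w i0 = 2 := by simp [hw]
    have e1 : w i1 = -1 := by simp [hw, h01.symm]
    have e2 : w i2 = -1 := by simp [hw, h02.symm, h12.symm]
    rw [e0, e1, e2]; ring
  have hwV : w ∈ V := by
    rw [hVmem]
    refine ⟨fun j hj => hwz j (by omega), ?_⟩
    have h := hsumgen id rfl
    simp only [id_eq] at h
    rw [h]; norm_num
  have hwsum : ∑ j ∈ F, (w j) ^ 3 = 6 := by
    have h := hsumgen (fun t => t ^ 3) (by norm_num)
    norm_num at h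
    exact h
  -- (c), part 2
  have hc2 : ¬ ∃ Q : MvPolynomial (Fin k) ℝ, HInv k Q ∧
      ∀ x ∈ V, MvPolynomial.eval x Q = ∑ j ∈ F, (x j) ^ 3 := by
    rintro ⟨Q, hQinv, hQ⟩
    have h1 := hQ w hwV
    have h2 := hQ (-w) (hneg w hwV)
    have h3 := hb Q hQinv w hwV
    have h4 : ∑ j ∈ F, ((-w) j) ^ 3 = -∑ j ∈ F, (w j) ^ 3 := by
      rw [← Finset.sum_neg_distrib]
      exact Finset.sum_congr rfl fun j _ => by simp only [Pi.neg_apply]; ring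
    rw [h1, h2, h4, hwsum] at h3
    norm_num at h3
  refine ⟨?_, hb, ⟨⟨w, hwV, by rw [hwsum]; norm_num⟩, hc2⟩, ?_⟩
  -- (a)
  · refine ⟨1, fun _ => -1, fun _ => Or.inr rfl, ?_, ?_⟩
    · ext y
      simp only [Set.mem_image]
      constructor
      · rintro ⟨x, hx, rfl⟩
        have : (fun j => (-1 : ℝ) * x ((1 : Equiv.Perm (Fin k)) j)) = -x := by
          funext j; simp
        rw [this]; exact hneg x hx
      · intro hy
        refine ⟨-y, hneg y hy, ?_⟩
        funext j; simp
    · intro x _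
      funext j; simp
  -- (d)
  · intro h
    set P : MvPolynomial (Fin k) ℝ := ∑ j ∈ F, (MvPolynomial.X j) ^ 3 with hP
    have hevalP : ∀ y : Fin k → ℝ,
        MvPolynomial.eval y P = ∑ j ∈ F, (y j) ^ 3 := by
      intro y; simp [hP]
    have hinv : ∀ σ : Equiv.Perm (Fin k), (∀ j : Fin k, m ≤ (j : ℕ) → σ j = j) →
        ∀ x ∈ V, MvPolynomial.eval (fun i => x (σ i)) P = MvPolynomial.eval x P := by
      intro σ hσ x _
      rw [hevalP, hevalP]
      have hmem : ∀ j : Fin k, j ∈ F ↔ σ j ∈ F := by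
        intro j
        simp only [hF, Finset.mem_filter, Finset.mem_univ, true_and]
        constructor
        · intro hj
          by_contra hc
          push_neg at hc
          have := hσ (σ j) hc
          have hjj : σ j = j := σ.injective this
          omega
        · intro hj
          by_contra hc
          push_neg at hc
          have := hσ j hc
          rw [this] at hj
          omega
      exact Finset.sum_equiv σ hmem (fun i _ => rfl)
    obtain ⟨Q, hQinv, hQ⟩ := h P hinv
    exact hc2 ⟨Q, hQinv, fun x hx => by rw [hQ x hx, hevalP]⟩
end

section
/- Let k ≥ 1. A polynomial P on ℝ^k is invariant under W(D_k) if and only if there exist symmetric polynomials Q and R in k variables such that P(x_1, …, x_k) = Q(x_1², …, x_k²) + (x_1 x_2 ⋯ x_k) · R(x_1², …, x_k²) for all x ∈ ℝ^k. -/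
open MvPolynomial Finset

namespace Stmt10Aux

variable {k : ℕ}

noncomputable def half (α : Fin k →₀ ℕ) : Fin k →₀ ℕ :=
  Finsupp.equivFunOnFinite.symm (fun i => α i / 2)

@[simp] lemma half_apply (α : Fin k →₀ ℕ) (i : Fin k) : half α i = α i / 2 := rfl

noncomputable def ones : Fin k →₀ ℕ :=
  Finsupp.equivFunOnFinite.symm (fun _ => 1)

@[simp] lemma ones_apply (i : Fin k) : (ones : Fin k →₀ ℕ) i = 1 := rfl

/-- product of a function that is 1 outside {i,j} -/
lemma prod_pair_outside {i j : Fin k} (hij : i ≠ j) (f : Fin k → ℝ)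
    (hf : ∀ l, l ≠ i → l ≠ j → f l = 1) : (∏ l, f l) = f i * f j := by
  rw [← Finset.prod_subset (Finset.subset_univ ({i, j} : Finset (Fin k)))
    (fun x _ hx => by
      simp only [Finset.mem_insert, Finset.mem_singleton, not_or] at hx
      exact hf x hx.1 hx.2)]
  exact Finset.prod_pair hij

lemma coeff_sign (P : MvPolynomial (Fin k) ℝ) (ε : Fin k → ℝ)
    (h : ∀ x : Fin k → ℝ, eval (fun j => ε j * x j) P = eval x P) (β : Fin k →₀ ℕ) :
    P.coeff β * ∏ i, ε i ^ β i = P.coeff β := by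
  set G : MvPolynomial (Fin k) ℝ :=
    ∑ α ∈ P.support, monomial α (P.coeff α * ∏ i, ε i ^ α i) with hGdef
  have hG : ∀ x : Fin k → ℝ, eval x G = eval (fun j => ε j * x j) P := by
    intro x
    rw [hGdef, map_sum, eval_eq' (fun j => ε j * x j) P]
    refine Finset.sum_congr rfl fun α _ => ?_
    rw [eval_monomial, Finsupp.prod_fintype _ _ (fun i => pow_zero _)]
    rw [mul_assoc, ← Finset.prod_mul_distrib]
    congr 1
    refine Finset.prod_congr rfl fun i _ => ?_
    rw [mul_pow]
  have hGP : G = P := MvPolynomial.funext fun x => (hG x).trans (h x)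
  have hcoeff : G.coeff β = P.coeff β * ∏ i, ε i ^ β i := by
    rw [hGdef, coeff_sum]
    have : ∀ α ∈ P.support,
        coeff β (monomial α (P.coeff α * ∏ i, ε i ^ α i)) =
          if α = β then P.coeff α * ∏ i, ε i ^ α i else 0 :=
      fun α _ => coeff_monomial β α _
    rw [Finset.sum_congr rfl this, Finset.sum_ite_eq' P.support β]
    by_cases hβ : β ∈ P.support
    · rw [if_pos hβ]
    · rw [if_neg hβ, MvPolynomial.notMem_support_iff.mp hβ, zero_mul]
  rw [← hcoeff, hGP]

lemma coeff_perm (P : MvPolynomial (Fin k) ℝ) (σ : Equiv.Perm (Fin k))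
    (h : ∀ x : Fin k → ℝ, eval (fun j => x (σ j)) P = eval x P) (d : Fin k →₀ ℕ) :
    P.coeff (Finsupp.equivMapDomain σ d) = P.coeff d := by
  have hren : rename σ P = P := by
    apply MvPolynomial.funext
    intro x
    rw [eval_rename]
    exact h x
  have := MvPolynomial.coeff_rename_mapDomain σ σ.injective P d
  rwa [hren, ← Finsupp.equivMapDomain_eq_mapDomain] at this

noncomputable def Qpoly (P : MvPolynomial (Fin k) ℝ) : MvPolynomial (Fin k) ℝ :=
  ∑ α ∈ P.support.filter (fun α => ∀ i, Even (α i)), monomial (half α) (P.coeff α)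

noncomputable def Rpoly (P : MvPolynomial (Fin k) ℝ) : MvPolynomial (Fin k) ℝ :=
  ∑ α ∈ P.support.filter (fun α => ∀ i, ¬ Even (α i)), monomial (half α) (P.coeff α)

lemma coeff_Qpoly (P : MvPolynomial (Fin k) ℝ) (β : Fin k →₀ ℕ) :
    (Qpoly P).coeff β = P.coeff (β + β) := by
  rw [Qpoly, coeff_sum]
  have key : ∀ α ∈ P.support.filter (fun α => ∀ i, Even (α i)),
      coeff β (monomial (half α) (P.coeff α)) = if α = β + β then P.coeff α else 0 := by
    intro α hα
    rw [Finset.mem_filter] at hα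
    rw [coeff_monomial]
    congr 1
    simp only [eq_iff_iff]
    constructor
    · intro hhalf
      ext i
      have h1 : α i / 2 = β i := by
        have := congrArg (fun f => f i) hhalf
        simpa using this
      have h2 : 2 ∣ α i := (hα.2 i).two_dvd
      simp only [Finsupp.coe_add, Pi.add_apply]
      omega
    · intro hab
      ext i
      have : α i = β i + β i := by rw [hab]; simp
      simp [this]
      omega
  rw [Finset.sum_congr rfl key, Finset.sum_ite_eq' _ (β + β)]
  by_cases hb : β + β ∈ P.support.filter (fun α => ∀ i, Even (α i))
  · rw [if_pos hb]
  · rw [if_neg hb]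
    rw [Finset.mem_filter] at hb
    push_neg at hb
    by_cases hs : β + β ∈ P.support
    · exact absurd (hs) (by
        intro h'
        obtain ⟨i, hi⟩ := hb h'
        exact hi ⟨β i, by simp⟩)
    · exact (MvPolynomial.notMem_support_iff.mp hs).symm

lemma coeff_Rpoly (P : MvPolynomial (Fin k) ℝ) (β : Fin k →₀ ℕ) :
    (Rpoly P).coeff β = P.coeff (β + β + ones) := by
  rw [Rpoly, coeff_sum]
  have key : ∀ α ∈ P.support.filter (fun α => ∀ i, ¬ Even (α i)),
      coeff β (monomial (half α) (P.coeff α)) = if α = β + β + ones then P.coeff α else 0 := by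
    intro α hα
    rw [Finset.mem_filter] at hα
    rw [coeff_monomial]
    congr 1
    simp only [eq_iff_iff]
    constructor
    · intro hhalf
      ext i
      have h1 : α i / 2 = β i := by
        have := congrArg (fun f => f i) hhalf
        simpa using this
      have h2 : α i % 2 = 1 := Nat.not_even_iff.mp (hα.2 i)
      simp only [Finsupp.coe_add, Pi.add_apply, ones_apply]
      omega
    · intro hab
      ext i
      have : α i = β i + β i + 1 := by rw [hab]; simp
      simp [this]
      omega
  rw [Finset.sum_congr rfl key, Finset.sum_ite_eq' _ (β + β + ones)]
  by_cases hb : β + β + ones ∈ P.support.filter (fun α => ∀ i, ¬ Even (α i))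
  · rw [if_pos hb]
  · rw [if_neg hb]
    rw [Finset.mem_filter] at hb
    push_neg at hb
    by_cases hs : β + β + ones ∈ P.support
    · exfalso
      obtain ⟨i, hi⟩ := hb hs
      have hv : Even (β i + β i + 1) := by
        simpa using hi
      obtain ⟨m, hm⟩ := hv
      omega
    · exact (MvPolynomial.notMem_support_iff.mp hs).symm


lemma eval_decomp (P : MvPolynomial (Fin k) ℝ) (hk : 1 ≤ k)
    (hpar : ∀ α ∈ P.support, (∀ i, Even (α i)) ∨ (∀ i, ¬ Even (α i))) (x : Fin k → ℝ) :
    eval x P = eval (fun j => x j ^ 2) (Qpoly P) +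
      (∏ j, x j) * eval (fun j => x j ^ 2) (Rpoly P) := by
  rw [eval_eq' x P,
    ← Finset.sum_filter_add_sum_filter_not P.support (fun α => ∀ i, Even (α i))]
  have hfc : P.support.filter (fun α => ¬ ∀ i, Even (α i)) =
      P.support.filter (fun α => ∀ i, ¬ Even (α i)) := by
    apply Finset.filter_congr
    intro α hα
    constructor
    · intro hne
      rcases hpar α hα with h | h
      · exact absurd h hne
      · exact h
    · intro h hall
      exact h ⟨0, hk⟩ (hall ⟨0, hk⟩)
  rw [hfc]
  congr 1
  · -- even part
    rw [Qpoly, map_sum]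
    refine Finset.sum_congr rfl fun α hα => ?_
    rw [Finset.mem_filter] at hα
    rw [eval_monomial, Finsupp.prod_fintype _ _ (fun i => pow_zero _)]
    congr 1
    refine Finset.prod_congr rfl fun i _ => ?_
    show x i ^ α i = (x i ^ 2) ^ (α i / 2)
    have h2 : α i = 2 * (α i / 2) := (Nat.mul_div_cancel' (hα.2 i).two_dvd).symm
    conv_lhs => rw [h2]
    rw [pow_mul]
  · -- odd part
    rw [Rpoly, map_sum, Finset.mul_sum]
    refine Finset.sum_congr rfl fun α hα => ?_
    rw [Finset.mem_filter] at hα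
    rw [eval_monomial, Finsupp.prod_fintype _ _ (fun i => pow_zero _)]
    rw [mul_comm (∏ j, x j), mul_assoc, ← Finset.prod_mul_distrib]
    congr 1
    refine Finset.prod_congr rfl fun i _ => ?_
    show x i ^ α i = (x i ^ 2) ^ (α i / 2) * x i
    have h2 : α i % 2 = 1 := Nat.not_even_iff.mp (hα.2 i)
    have h3 : α i = 2 * (α i / 2) + 1 := by omega
    conv_lhs => rw [h3]
    rw [pow_succ, pow_mul]

lemma perm_Qpoly (P : MvPolynomial (Fin k) ℝ)
    (hperm : ∀ (σ : Equiv.Perm (Fin k)) (d : Fin k →₀ ℕ),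
      P.coeff (Finsupp.equivMapDomain σ d) = P.coeff d)
    (σ : Equiv.Perm (Fin k)) (x : Fin k → ℝ) :
    eval (fun i => x (σ i)) (Qpoly P) = eval x (Qpoly P) := by
  have hren : rename σ (Qpoly P) = Qpoly P := by
    apply MvPolynomial.ext
    intro γ
    set d : Fin k →₀ ℕ := Finsupp.equivMapDomain σ.symm γ with hd
    have hmd : Finsupp.mapDomain σ d = γ := by
      rw [← Finsupp.equivMapDomain_eq_mapDomain]
      ext i
      simp [hd, Finsupp.equivMapDomain_apply]
    have h1 : coeff γ (rename σ (Qpoly P)) = coeff d (Qpoly P) := by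
      rw [← hmd, MvPolynomial.coeff_rename_mapDomain σ σ.injective]
    rw [h1, coeff_Qpoly, coeff_Qpoly]
    have h2 : Finsupp.equivMapDomain σ (d + d) = γ + γ := by
      ext i
      simp [hd, Finsupp.equivMapDomain_apply]
    rw [← h2, hperm σ (d + d)]
  calc eval (fun i => x (σ i)) (Qpoly P) = eval (x ∘ σ) (Qpoly P) := rfl
    _ = eval x (rename σ (Qpoly P)) := (eval_rename _ _ _).symm
    _ = eval x (Qpoly P) := by rw [hren]

lemma perm_Rpoly (P : MvPolynomial (Fin k) ℝ)
    (hperm : ∀ (σ : Equiv.Perm (Fin k)) (d : Fin k →₀ ℕ),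
      P.coeff (Finsupp.equivMapDomain σ d) = P.coeff d)
    (σ : Equiv.Perm (Fin k)) (x : Fin k → ℝ) :
    eval (fun i => x (σ i)) (Rpoly P) = eval x (Rpoly P) := by
  have hren : rename σ (Rpoly P) = Rpoly P := by
    apply MvPolynomial.ext
    intro γ
    set d : Fin k →₀ ℕ := Finsupp.equivMapDomain σ.symm γ with hd
    have hmd : Finsupp.mapDomain σ d = γ := by
      rw [← Finsupp.equivMapDomain_eq_mapDomain]
      ext i
      simp [hd, Finsupp.equivMapDomain_apply]
    have h1 : coeff γ (rename σ (Rpoly P)) = coeff d (Rpoly P) := by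
      rw [← hmd, MvPolynomial.coeff_rename_mapDomain σ σ.injective]
    rw [h1, coeff_Rpoly, coeff_Rpoly]
    have h2 : Finsupp.equivMapDomain σ (d + d + ones) = γ + γ + ones := by
      ext i
      simp [hd, Finsupp.equivMapDomain_apply]
    rw [← h2, hperm σ (d + d + ones)]
  calc eval (fun i => x (σ i)) (Rpoly P) = eval (x ∘ σ) (Rpoly P) := rfl
    _ = eval x (rename σ (Rpoly P)) := (eval_rename _ _ _).symm
    _ = eval x (Rpoly P) := by rw [hren]

end Stmt10Aux

open MvPolynomial in
/-- a polynomial `P` on `ℝ^k` is invariant under `W(D_k)` (signed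
permutations `x ↦ (ε_j x_{σ(j)})_j` with `∏ ε_j = 1`) iff there are symmetric
polynomials `Q, R` in `k` variables with
`P(x) = Q(x₁², …, x_k²) + (x₁ x₂ ⋯ x_k) · R(x₁², …, x_k²)` for all `x`. -/
theorem stmt_10 (k : ℕ) (hk : 1 ≤ k) (P : MvPolynomial (Fin k) ℝ) :
    (∀ (σ : Equiv.Perm (Fin k)) (ε : Fin k → ℝ), (∀ j, ε j = 1 ∨ ε j = -1) →
      (∏ j, ε j) = 1 →
      ∀ x : Fin k → ℝ,
        MvPolynomial.eval (fun j => ε j * x (σ j)) P = MvPolynomial.eval x P) ↔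
    ∃ Q R : MvPolynomial (Fin k) ℝ,
      (∀ (σ : Equiv.Perm (Fin k)) (x : Fin k → ℝ),
        MvPolynomial.eval (fun i => x (σ i)) Q = MvPolynomial.eval x Q) ∧
      (∀ (σ : Equiv.Perm (Fin k)) (x : Fin k → ℝ),
        MvPolynomial.eval (fun i => x (σ i)) R = MvPolynomial.eval x R) ∧
      ∀ x : Fin k → ℝ,
        MvPolynomial.eval x P =
          MvPolynomial.eval (fun j => x j ^ 2) Q +
            (∏ j, x j) * MvPolynomial.eval (fun j => x j ^ 2) R := by
  constructor
  · intro hinv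
    have hsign : ∀ (ε : Fin k → ℝ), (∀ j, ε j = 1 ∨ ε j = -1) → (∏ j, ε j) = 1 →
        ∀ β : Fin k →₀ ℕ, P.coeff β * ∏ i, ε i ^ β i = P.coeff β := fun ε hε hp β =>
      Stmt10Aux.coeff_sign P ε (fun x => by simpa using hinv 1 ε hε hp x) β
    have hperm : ∀ (σ : Equiv.Perm (Fin k)) (d : Fin k →₀ ℕ),
        P.coeff (Finsupp.equivMapDomain σ d) = P.coeff d := by
      intro σ d
      apply Stmt10Aux.coeff_perm P σ
      intro x
      have := hinv σ (fun _ => 1) (fun _ => Or.inl rfl) (by simp) x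
      simpa using this
    have hpar : ∀ α ∈ P.support, (∀ i, Even (α i)) ∨ (∀ i, ¬ Even (α i)) := by
      intro α hα
      set i₀ : Fin k := ⟨0, hk⟩ with hi₀
      have hpair : ∀ i, i ≠ i₀ → Even (α i + α i₀) := by
        intro i hi
        set ε : Fin k → ℝ := fun l => if l = i then -1 else if l = i₀ then -1 else 1 with hε
        have hε1 : ∀ l, ε l = 1 ∨ ε l = -1 := by
          intro l
          simp only [hε]
          split_ifs <;> simp
        have hεi : ε i = -1 := by simp [hε]
        have hεi₀ : ε i₀ = -1 := by
          simp only [hε]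
          split_ifs <;> rfl
        have houtside : ∀ l, l ≠ i → l ≠ i₀ → ε l = 1 := by
          intro l h1 h2
          simp [hε, h1, h2]
        have hprod : (∏ l, ε l) = 1 := by
          rw [Stmt10Aux.prod_pair_outside hi ε houtside, hεi, hεi₀]
          norm_num
        have hs := hsign ε hε1 hprod α
        have hw : (∏ l, ε l ^ α l) = (-1 : ℝ) ^ (α i) * (-1 : ℝ) ^ (α i₀) := by
          rw [Stmt10Aux.prod_pair_outside hi (fun l => ε l ^ α l)
            (fun l h1 h2 => by show ε l ^ α l = 1; rw [houtside l h1 h2, one_pow]), hεi, hεi₀]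
        rw [hw] at hs
        have hc : P.coeff α ≠ 0 := MvPolynomial.mem_support_iff.mp hα
        have h1 : (-1 : ℝ) ^ (α i + α i₀) = 1 := by
          rw [pow_add]
          exact mul_left_cancel₀ hc (hs.trans (mul_one _).symm)
        exact (neg_one_pow_eq_one_iff_even (by norm_num : (-1 : ℝ) ≠ 1)).mp h1
      by_cases he : Even (α i₀)
      · left
        intro i
        by_cases h : i = i₀
        · rwa [h]
        · exact (Nat.even_add.mp (hpair i h)).mpr he
      · right
        intro i
        by_cases h : i = i₀
        · rwa [h]
        · intro hcon
          exact he ((Nat.even_add.mp (hpair i h)).mp hcon)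
    exact ⟨Stmt10Aux.Qpoly P, Stmt10Aux.Rpoly P,
      Stmt10Aux.perm_Qpoly P hperm, Stmt10Aux.perm_Rpoly P hperm,
      Stmt10Aux.eval_decomp P hk hpar⟩
  · rintro ⟨Q, R, hQ, hR, hPx⟩ σ ε hε hprod x
    have hsq : (fun j => (ε j * x (σ j)) ^ 2) = (fun j => (fun i => x i ^ 2) (σ j)) := by
      funext j
      rcases hε j with h | h <;> rw [h] <;> ring
    have hp : (∏ j, ε j * x (σ j)) = ∏ j, x j := by
      rw [Finset.prod_mul_distrib, hprod, one_mul]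
      exact Equiv.prod_comp σ x
    have e1 : MvPolynomial.eval (fun j => (ε j * x (σ j)) ^ 2) Q =
        MvPolynomial.eval (fun j => x j ^ 2) Q := by
      rw [hsq]
      exact hQ σ (fun i => x i ^ 2)
    have e3 : MvPolynomial.eval (fun j => (ε j * x (σ j)) ^ 2) R =
        MvPolynomial.eval (fun j => x j ^ 2) R := by
      rw [hsq]
      exact hR σ (fun i => x i ^ 2)
    calc MvPolynomial.eval (fun j => ε j * x (σ j)) P
        = MvPolynomial.eval (fun j => (ε j * x (σ j)) ^ 2) Q +
            (∏ j, ε j * x (σ j)) * MvPolynomial.eval (fun j => (ε j * x (σ j)) ^ 2) R :=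
          hPx _
      _ = MvPolynomial.eval (fun j => x j ^ 2) Q +
            (∏ j, x j) * MvPolynomial.eval (fun j => x j ^ 2) R := by rw [e1, e3, hp]
      _ = MvPolynomial.eval x P := (hPx x).symm
end
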